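/- Let g ∈ L^∞(𝕋) with |g| = 1 a.e. on 𝕋, and let f^M be a maximal function of ker T_g with inner–outer factorisation f^M = I·O (I inner, O outer). Then the set of all functions in ker T_g whose outer factor is O equals {α·O : α inner and α ≼ I}, where α ≼ I means I·ᾱ ∈ H^∞. -/

import Mathlib

open MeasureTheory Complex
open scoped Real ComplexConjugate ENNReal

noncomputable section

namespace ToeplitzKernels

/-- We model the unit circle `𝕋` as `AddCircle (2 * π)`. -/
abbrev UnitCircle := AddCircle (2 * Real.pi)

instance : Fact (0 < 2 * Real.pi) := ⟨by positivity⟩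

/-- The normalised Haar (arc-length) measure on the circle. -/
abbrev muT : Measure UnitCircle := AddCircle.haarAddCircle

/-- `L²(𝕋)`. -/
abbrev L2T := Lp ℂ 2 muT

/-- The coordinate function `z` on the circle. -/
def zf : UnitCircle → ℂ := fun x => fourier 1 x

/-- A (plain) function belongs to `H²`: it is square integrable and all its Fourier
coefficients of negative index vanish. -/
def InH2 (f : UnitCircle → ℂ) : Prop :=
  MemLp f 2 muT ∧ ∀ n : ℤ, n < 0 → fourierCoeff f n = 0

/-- `H²` as a subset of `L²`. -/
def H2 : Set L2T :=
  {u | ∀ n : ℤ, n < 0 → fourierCoeff (u : UnitCircle → ℂ) n = 0}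

/-- A function belongs to `H^∞`: it is a bounded member of `H²`. -/
def InHinf (f : UnitCircle → ℂ) : Prop :=
  InH2 f ∧ MemLp f ⊤ muT

/-- `f` is outer: `f ∈ H²` and the closed linear span of `{zⁿ f : n ≥ 0}` in `L²` is `H²`. -/
def IsOuter (f : UnitCircle → ℂ) : Prop :=
  InH2 f ∧
    closure ((Submodule.span ℂ
        {u : L2T | ∃ n : ℕ, (u : UnitCircle → ℂ) =ᵐ[muT] fun x => zf x ^ n * f x} :
          Submodule ℂ L2T) : Set L2T) = H2

/-- `f` is inner: `f ∈ H²` (hence in `H^∞`) and `|f| = 1` a.e. on `𝕋`. -/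
def IsInner (f : UnitCircle → ℂ) : Prop :=
  InH2 f ∧ ∀ᵐ x ∂muT, ‖f x‖ = 1

/-- The kernel of the Toeplitz operator `T_g`, as a subset of `L²`: those `f ∈ H²` with
`P⁺(g f) = 0`, i.e. all Fourier coefficients of `g·f` of index `≥ 0` vanish. -/
def kerT (g : UnitCircle → ℂ) : Set L2T :=
  {u | u ∈ H2 ∧ ∀ n : ℤ, 0 ≤ n →
    fourierCoeff (fun x => g x * (u : UnitCircle → ℂ) x) n = 0}

/-- Membership of (the a.e. class of) a plain function in `ker T_g`. -/
def InKerT (g f : UnitCircle → ℂ) : Prop :=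
  InH2 f ∧ ∀ n : ℤ, 0 ≤ n → fourierCoeff (fun x => g x * f x) n = 0

/-- The model space `K_θ = ker T_{θ̄}`. -/
def modelSpace (θ : UnitCircle → ℂ) : Set L2T :=
  kerT fun x => conj (θ x)

/-- `f` is a maximal function of `ker T_g`: `f ∈ H²` and `g f = z̄ Ō` a.e. on `𝕋`
for some outer `O ∈ H²` (equivalently, `ker T_g` is the smallest Toeplitz kernel
containing `f`). -/
def IsMaximal (g f : UnitCircle → ℂ) : Prop :=
  InH2 f ∧ ∃ O : UnitCircle → ℂ, IsOuter O ∧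
    (fun x => g x * f x) =ᵐ[muT] fun x => conj (zf x) * conj (O x)

/-- The set `w·S ⊆ L²`, for a set `S ⊆ L²` of square-integrable functions. -/
def mulSet (w : UnitCircle → ℂ) (S : Set L2T) : Set L2T :=
  {u | ∃ v ∈ S, (u : UnitCircle → ℂ) =ᵐ[muT] fun x => w x * (v : UnitCircle → ℂ) x}

/-- `w·S ⊆ L²(𝕋)`. -/
def mulMapsIntoL2 (w : UnitCircle → ℂ) (S : Set L2T) : Prop :=
  ∀ v ∈ S, MemLp (fun x => w x * (v : UnitCircle → ℂ) x) 2 muT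

/-- `w⁻¹·S ⊆ L²(𝕋)`. -/
def invMulMapsIntoL2 (w : UnitCircle → ℂ) (S : Set L2T) : Prop :=
  ∀ v ∈ S, MemLp (fun x => (w x)⁻¹ * (v : UnitCircle → ℂ) x) 2 muT

/-- An outer function `O` is square-rigid if `ker T_{z̄ Ō / O} = ℂ · O`. -/
def IsSquareRigidOuter (O : UnitCircle → ℂ) : Prop :=
  kerT (fun x => conj (zf x) * conj (O x) / O x)
    = {u : L2T | ∃ c : ℂ, (u : UnitCircle → ℂ) =ᵐ[muT] fun x => c * O x}

/-- `w ∈ H²` is square-rigid if the outer factor of `w` is square-rigid. -/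
def IsSquareRigid (w : UnitCircle → ℂ) : Prop :=
  ∃ I O : UnitCircle → ℂ, IsInner I ∧ IsOuter O ∧
    (w =ᵐ[muT] fun x => I x * O x) ∧ IsSquareRigidOuter O

/-- The (linear) dimension of a subset of `L²` (the rank of its linear span). -/
def setDim (S : Set L2T) : Cardinal :=
  Module.rank ℂ (Submodule.span ℂ S)

/-- The value at a point `l` of the open unit disc of the holomorphic extension of a
function `f ∈ H²` on the boundary. -/
def diskValue (f : UnitCircle → ℂ) (l : ℂ) : ℂ :=
  ∑' n : ℕ, fourierCoeff f (n : ℤ) * l ^ n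

/-- The reproducing kernel `k_λ^θ = (1 - conj (θ(λ)) θ)/(1 - λ̄ z)` (boundary values). -/
def kFun (θ : UnitCircle → ℂ) (l : ℂ) : UnitCircle → ℂ :=
  fun x => (1 - conj (diskValue θ l) * θ x) / (1 - conj l * zf x)

/-- The conjugate kernel `k̃_λ^θ = (θ - θ(λ))/(z - λ)` (boundary values). -/
def ktFun (θ : UnitCircle → ℂ) (l : ℂ) : UnitCircle → ℂ :=
  fun x => (θ x - diskValue θ l) / (zf x - l)

/-- The conjugation `C_ḡ f = ḡ z̄ f̄` associated to a unimodular symbol `g`. -/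
def conjC (g f : UnitCircle → ℂ) : UnitCircle → ℂ :=
  fun x => conj (g x) * conj (zf x) * conj (f x)

/-- `α` is a finite Blaschke product with exactly `k` zeroes in `𝔻` (with multiplicity). -/
def IsFiniteBlaschke (α : UnitCircle → ℂ) (k : ℕ) : Prop :=
  ∃ (c : ℂ) (a : Fin k → ℂ), ‖c‖ = 1 ∧ (∀ i, ‖a i‖ < 1) ∧
    α =ᵐ[muT] fun x => c * ∏ i, (zf x - a i) / (1 - conj (a i) * zf x)

lemma norm_fourier (n : ℤ) (x : UnitCircle) : ‖fourier n x‖ = 1 := by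
  rw [fourier_apply]; exact Circle.norm_coe _

lemma fourierCoeff_congr {f g : UnitCircle → ℂ} (h : f =ᵐ[muT] g) (n : ℤ) :
    fourierCoeff f n = fourierCoeff g n := by
  unfold fourierCoeff
  exact integral_congr_ae (h.mono fun x hx => by simp [hx])

lemma fourierCoeff_fourier_mul (k n : ℤ) (f : UnitCircle → ℂ) :
    fourierCoeff (fun x => fourier k x * f x) n = fourierCoeff f (n - k) := by
  unfold fourierCoeff
  have h : -(n - k) = -n + k := by ring
  rw [h]
  congr 1; ext x
  simp only [smul_eq_mul, ← mul_assoc, ← fourier_add]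

lemma fourierCoeff_conj (f : UnitCircle → ℂ) (n : ℤ) :
    fourierCoeff (fun x => conj (f x)) n = conj (fourierCoeff f (-n)) := by
  unfold fourierCoeff
  rw [← integral_conj]
  congr 1; ext x
  simp only [smul_eq_mul, map_mul, ← fourier_neg, neg_neg]

lemma memℒp_conj {f : UnitCircle → ℂ} {p : ℝ≥0∞} (hf : MemLp f p muT) :
    MemLp (fun x => conj (f x)) p muT :=
  hf.congr_norm (Complex.continuous_conj.comp_aestronglyMeasurable hf.aestronglyMeasurable)
    (by filter_upwards with x using (RCLike.norm_conj _).symm)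

lemma memℒp_top_mul {u v : UnitCircle → ℂ} {p : ℝ≥0∞} (hu : MemLp u ⊤ muT)
    (hv : MemLp v p muT) : MemLp (fun x => u x * v x) p muT := by
  simpa [Pi.smul_apply', smul_eq_mul, Pi.mul_def] using hv.smul (r := p) hu

lemma memℒp_fourier (n : ℤ) (p : ℝ≥0∞) : MemLp (fun x => fourier n x) p muT := by
  refine MemLp.of_bound ((fourier n).continuous.aestronglyMeasurable) 1 ?_
  filter_upwards with x using le_of_eq (norm_fourier n x)

lemma integral_fourier_eq_zero {n : ℤ} (hn : n ≠ 0) :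
    ∫ x, fourier n x ∂muT = 0 :=
  integral_eq_zero_of_add_right_eq_neg (μ := muT)
    (fourier_add_half_inv_index hn (by positivity))

lemma fourierCoeff_one {n : ℤ} (hn : n ≠ 0) :
    fourierCoeff (fun _ : UnitCircle => (1 : ℂ)) n = 0 := by
  unfold fourierCoeff
  simp only [smul_eq_mul, mul_one]
  exact integral_fourier_eq_zero (neg_ne_zero.mpr hn)

lemma inner_toLp_eq_fourierCoeff {u : UnitCircle → ℂ} {n : ℤ}
    (hW : MemLp (fun x => conj (u x) * fourier n x) 2 muT) (v : L2T) :
    @inner ℂ _ _ (hW.toLp _) v = fourierCoeff (fun x => u x * (v : UnitCircle → ℂ) x) n := by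
  rw [MeasureTheory.L2.inner_def]
  unfold fourierCoeff
  refine integral_congr_ae ?_
  filter_upwards [hW.coeFn_toLp] with x hx
  rw [hx]
  simp only [RCLike.inner_apply, smul_eq_mul, map_mul, RingHom.map_one,
    RCLike.conj_conj, ← fourier_neg]
  ring

lemma fourierCoeff_mul_eq_tsum {u v : UnitCircle → ℂ} (hu : MemLp u ⊤ muT)
    (hv : MemLp v 2 muT) (n : ℤ) :
    fourierCoeff (fun x => u x * v x) n
      = ∑' i : ℤ, fourierCoeff u (n - i) * fourierCoeff v i := by
  have hW : MemLp (fun x => conj (u x) * fourier n x) 2 muT :=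
    memℒp_top_mul (memℒp_conj hu) (memℒp_fourier n 2)
  set WL : L2T := hW.toLp _ with hWL
  set VL : L2T := hv.toLp _ with hVL
  have h1 : @inner ℂ _ _ WL VL = fourierCoeff (fun x => u x * v x) n := by
    rw [inner_toLp_eq_fourierCoeff hW VL]
    refine fourierCoeff_congr ?_ n
    filter_upwards [hv.coeFn_toLp] with x hx
    rw [hx]
  have h2 := fourierBasis.tsum_inner_mul_inner WL VL
  rw [← h1, ← h2]
  refine tsum_congr fun i => ?_
  have hbW : @inner ℂ _ _ (fourierBasis i) WL = fourierCoeff (WL : UnitCircle → ℂ) i := by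
    rw [← fourierBasis_repr]; exact (fourierBasis.repr_apply_apply WL i).symm
  have hbV : @inner ℂ _ _ (fourierBasis i) VL = fourierCoeff (VL : UnitCircle → ℂ) i := by
    rw [← fourierBasis_repr]; exact (fourierBasis.repr_apply_apply VL i).symm
  have hWc : fourierCoeff (WL : UnitCircle → ℂ) i = conj (fourierCoeff u (n - i)) := by
    rw [fourierCoeff_congr hW.coeFn_toLp]
    have : (fun x => conj (u x) * fourier n x) = fun x => fourier n x * conj (u x) := by
      ext x; ring
    rw [this, fourierCoeff_fourier_mul, fourierCoeff_conj, neg_sub]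
  have hVc : fourierCoeff (VL : UnitCircle → ℂ) i = fourierCoeff v i :=
    fourierCoeff_congr hv.coeFn_toLp i
  rw [← inner_conj_symm WL (fourierBasis i), hbW, hbV, hWc, hVc, RCLike.conj_conj]


lemma mul_conj_eq_one {z : ℂ} (hz : ‖z‖ = 1) : z * conj z = 1 := by
  rw [Complex.mul_conj, Complex.normSq_eq_norm_sq, hz]
  norm_num

lemma zf_pow (k : ℕ) (x : UnitCircle) : zf x ^ k = fourier (k : ℤ) x := by
  induction k with
  | zero => simp [fourier_zero]
  | succ m ih =>
    rw [pow_succ, ih, zf]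
    rw [show ((m + 1 : ℕ) : ℤ) = (m : ℤ) + 1 by push_cast; ring, fourier_add]

lemma inH2_mul {u v : UnitCircle → ℂ} (hu2 : ∀ n : ℤ, n < 0 → fourierCoeff u n = 0)
    (hut : MemLp u ⊤ muT) (hv : InH2 v) : InH2 (fun x => u x * v x) := by
  refine ⟨memℒp_top_mul hut hv.1, fun n hn => ?_⟩
  rw [fourierCoeff_mul_eq_tsum hut hv.1 n]
  have hz : ∀ i : ℤ, fourierCoeff u (n - i) * fourierCoeff v i = 0 := by
    intro i
    rcases lt_or_ge i 0 with hi | hi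
    · rw [hv.2 i hi, mul_zero]
    · rw [hu2 (n - i) (by omega), zero_mul]
  simp only [hz, tsum_zero]

lemma inH2_congr {u v : UnitCircle → ℂ} (h : u =ᵐ[muT] v) (hu : InH2 u) : InH2 v :=
  ⟨hu.1.ae_eq h, fun n hn => (fourierCoeff_congr h.symm n).trans (hu.2 n hn)⟩

lemma inH2_of_mul_outer {u O : UnitCircle → ℂ} (hut : MemLp u ⊤ muT) (hO : IsOuter O)
    (huO : InH2 (fun x => u x * O x)) : InH2 u := by
  refine ⟨hut.mono_exponent le_top, fun n hn => ?_⟩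
  have hW : MemLp (fun x => conj (u x) * fourier n x) 2 muT :=
    memℒp_top_mul (memℒp_conj hut) (memℒp_fourier n 2)
  set φ : L2T →L[ℂ] ℂ := innerSL ℂ (hW.toLp _) with hφ
  have hφv : ∀ v : L2T, φ v = fourierCoeff (fun x => u x * (v : UnitCircle → ℂ) x) n :=
    fun v => inner_toLp_eq_fourierCoeff hW v
  have hgen : {w : L2T | ∃ k : ℕ, (w : UnitCircle → ℂ) =ᵐ[muT] fun x => zf x ^ k * O x}
      ⊆ (LinearMap.ker (φ : L2T →ₗ[ℂ] ℂ) : Set L2T) := by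
    rintro w ⟨k, hw⟩
    refine LinearMap.mem_ker.mpr (?_ : φ w = 0)
    rw [hφv w]
    have he : (fun x => u x * (w : UnitCircle → ℂ) x)
        =ᵐ[muT] fun x => fourier (k : ℤ) x * (u x * O x) := by
      filter_upwards [hw] with x hx
      rw [hx, zf_pow]; ring
    rw [fourierCoeff_congr he, fourierCoeff_fourier_mul]
    exact huO.2 _ (by omega)
  have hker : H2 ⊆ (LinearMap.ker (φ : L2T →ₗ[ℂ] ℂ) : Set L2T) := by
    rw [← hO.2]
    refine closure_minimal ?_ (ContinuousLinearMap.isClosed_ker φ)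
    exact SetLike.coe_subset_coe.mpr (Submodule.span_le.mpr hgen)
  have h1m : MemLp (fun _ : UnitCircle => (1 : ℂ)) 2 muT := memLp_const 1
  have h1H : h1m.toLp _ ∈ H2 := by
    intro m hm
    rw [fourierCoeff_congr h1m.coeFn_toLp]
    exact fourierCoeff_one (by omega)
  have h0 : φ (h1m.toLp _) = 0 := LinearMap.mem_ker.mp (hker h1H)
  rw [hφv] at h0
  rw [← h0]
  refine fourierCoeff_congr ?_ n
  filter_upwards [h1m.coeFn_toLp] with x hx
  rw [hx, mul_one]
/-- For unimodular `g` and `f^M = I·O` a maximal function of `ker T_g`, the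
set of functions in `ker T_g` with outer factor `O` is `{α·O : α inner, α ≼ I}`, where
`α ≼ I` means `I·ᾱ ∈ H^∞`. -/
theorem kerT_functions_with_same_outer_factor
    (g f I O : UnitCircle → ℂ) (hg : MemLp g ⊤ muT)
    (hgu : ∀ᵐ x ∂muT, ‖g x‖ = 1)
    (hmax : IsMaximal g f) (hI : IsInner I) (hO : IsOuter O)
    (hfIO : f =ᵐ[muT] fun x => I x * O x) :
    {h : UnitCircle → ℂ |
        InKerT g h ∧ ∃ β, IsInner β ∧ h =ᵐ[muT] fun x => β x * O x} =
    {h : UnitCircle → ℂ |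
        ∃ β, IsInner β ∧ InHinf (fun x => I x * conj (β x)) ∧
          h =ᵐ[muT] fun x => β x * O x} := by
  obtain ⟨hf2, O₀, hO₀, hgf⟩ := hmax
  have hgIO : (fun x => g x * (I x * O x)) =ᵐ[muT] fun x => conj (zf x) * conj (O₀ x) := by
    refine Filter.EventuallyEq.trans ?_ hgf
    filter_upwards [hfIO] with x hx
    rw [hx]
  ext h
  simp only [Set.mem_setOf_eq]
  constructor
  · rintro ⟨hk, β, hβ, hhβO⟩
    refine ⟨β, hβ, ?_, hhβO⟩
    have hIm : MemLp I ⊤ muT := memLp_top_of_bound hI.1.1.aestronglyMeasurable 1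
      (hI.2.mono fun x hx => le_of_eq hx)
    have hβm : MemLp β ⊤ muT := memLp_top_of_bound hβ.1.1.aestronglyMeasurable 1
      (hβ.2.mono fun x hx => le_of_eq hx)
    have hut : MemLp (fun x => I x * conj (β x)) ⊤ muT := memℒp_top_mul hIm (memℒp_conj hβm)
    have hgh2 : MemLp (fun x => g x * h x) 2 muT := memℒp_top_mul hg hk.1.1
    have hq2 : MemLp (fun x => conj (zf x * (g x * h x))) 2 muT :=
      memℒp_conj (memℒp_top_mul (memℒp_fourier 1 ⊤) hgh2)
    have hqH : InH2 (fun x => conj (zf x * (g x * h x))) := by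
      refine ⟨hq2, fun m hm => ?_⟩
      have h1 : fourierCoeff (fun x => conj (zf x * (g x * h x))) m
          = conj (fourierCoeff (fun x => zf x * (g x * h x)) (-m)) :=
        fourierCoeff_conj _ m
      rw [h1]
      have h2 : fourierCoeff (fun x => zf x * (g x * h x)) (-m)
          = fourierCoeff (fun x => g x * h x) (-m - 1) :=
        fourierCoeff_fourier_mul 1 (-m) _
      rw [h2, hk.2 (-m - 1) (by omega), map_zero]
    have huO₀ : (fun x => (I x * conj (β x)) * O₀ x)
        =ᵐ[muT] fun x => conj (zf x * (g x * h x)) := by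
      filter_upwards [hgIO, hhβO, hI.2] with x h1 h2 h3
      have hIc : I x * conj (I x) = 1 := mul_conj_eq_one h3
      have hzc : zf x * conj (zf x) = 1 := mul_conj_eq_one (norm_fourier 1 x)
      have hO₀x : zf x * O₀ x = conj (g x) * (conj (I x) * conj (O x)) := by
        have h1' := congrArg (starRingEnd ℂ) h1
        simp only [map_mul, RingHomCompTriple.comp_apply, RCLike.conj_conj] at h1'
        exact h1'.symm
      calc I x * conj (β x) * O₀ x
          = (zf x * conj (zf x)) * (I x * conj (β x) * O₀ x) := by rw [hzc, one_mul]
        _ = conj (zf x) * conj (β x) * I x * (zf x * O₀ x) := by ring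
        _ = conj (zf x) * conj (β x) * I x
            * (conj (g x) * (conj (I x) * conj (O x))) := by rw [hO₀x]
        _ = conj (zf x) * conj (g x) * conj (β x) * conj (O x)
            * (I x * conj (I x)) := by ring
        _ = conj (zf x) * conj (g x) * conj (β x) * conj (O x) := by rw [hIc, mul_one]
        _ = conj (zf x * (g x * h x)) := by
            rw [h2]
            simp only [map_mul]
            ring
    exact ⟨inH2_of_mul_outer hut hO₀ (inH2_congr huO₀.symm hqH), hut⟩
  · rintro ⟨β, hβ, huinf, hhβO⟩
    have hβm : MemLp β ⊤ muT := memLp_top_of_bound hβ.1.1.aestronglyMeasurable 1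
      (hβ.2.mono fun x hx => le_of_eq hx)
    refine ⟨⟨?_, ?_⟩, β, hβ, hhβO⟩
    · exact inH2_congr hhβO.symm (inH2_mul hβ.1.2 hβm hO.1)
    · intro n hn
      have hF : InH2 (fun x => (I x * conj (β x)) * O₀ x) :=
        inH2_mul huinf.1.2 huinf.2 hO₀.1
      have he : (fun x => g x * h x)
          =ᵐ[muT] fun x => fourier (-1 : ℤ) x * conj ((I x * conj (β x)) * O₀ x) := by
        filter_upwards [hgIO, hhβO, hI.2] with x h1 h2 h3
        have hIc : I x * conj (I x) = 1 := mul_conj_eq_one h3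
        have hf1 : fourier (-1 : ℤ) x = conj (zf x) := fourier_neg
        rw [hf1]
        simp only [map_mul, RCLike.conj_conj]
        linear_combination g x * h2 + β x * conj (I x) * h1 - g x * β x * O x * hIc
      rw [fourierCoeff_congr he n]
      have h4 : fourierCoeff
          (fun x => fourier (-1 : ℤ) x * conj ((I x * conj (β x)) * O₀ x)) n
          = fourierCoeff (fun x => conj ((I x * conj (β x)) * O₀ x)) (n + 1) := by
        rw [fourierCoeff_fourier_mul (-1) n, sub_neg_eq_add]
      rw [h4, fourierCoeff_conj, hF.2 _ (by omega), map_zero]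

end ToeplitzKernels
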